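/- Let H be a complex Hilbert space with group action κ, let s ∈ ℝ and let φ ∈ 𝒮(ℝ^q) be a scalar Schwartz function. Then there exists a constant C > 0 such that for all u ∈ 𝒮(ℝ^q, H): ‖φ · u‖_{𝒲^s} ≤ C · ‖u‖_{𝒲^s}, where (φ·u)(y) := φ(y)·u(y); i.e. multiplication by φ extends to a continuous operator M_φ : 𝒲^s(ℝ^q, H) → 𝒲^s(ℝ^q, H). -/

import Mathlib

open MeasureTheory Complex
open scoped ENNReal NNReal

noncomputable section

/-- `ℝ^q` as a Euclidean space. -/
abbrev Eucl (q : ℕ) := EuclideanSpace ℝ (Fin q)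

/-- The "Japanese bracket" `⟨η⟩ = (1+|η|²)^(1/2)`. -/
def jap {q : ℕ} (η : Eucl q) : ℝ := Real.sqrt (1 + ‖η‖ ^ 2)

/-- The Fourier transform `û(η) = ∫ e^{−i y·η} u(y) dy` of an `H`-valued function. -/
def ft {q : ℕ} {H : Type*} [NormedAddCommGroup H] [NormedSpace ℂ H]
    (u : Eucl q → H) (η : Eucl q) : H :=
  ∫ y, Complex.exp (-Complex.I * ((inner ℝ y η : ℝ) : ℂ)) • u y

/-- A group action on a complex Banach/Hilbert space `H`: a family `κ_λ`, `λ > 0`, of bounded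
invertible linear operators on `H` with `κ_λ ∘ κ_ν = κ_{λν}` which is strongly continuous. -/
structure GroupAction (H : Type*) [NormedAddCommGroup H] [NormedSpace ℂ H] where
  κ : ℝ → H ≃L[ℂ] H
  mul : ∀ ⦃l m : ℝ⦄, 0 < l → 0 < m → ∀ h : H, κ l (κ m h) = κ (l * m) h
  strong_cont : ∀ h : H, ContinuousOn (fun l => κ l h) (Set.Ioi (0 : ℝ))


/-!
On the Fourier side, multiplication by `φ` becomes convolution with `𝓕 φ`. By Banach–Steinhaus
`κ` is bounded on `[1/2, 2]`, so by the group law `‖κ_t‖` grows at most polynomially in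
`max t t⁻¹`; with Peetre's inequality this shows that the weight `⟨η⟩ ^ s κ⁻¹_⟨η⟩` changes by at
most a factor `C ⟨η - ζ⟩ ^ N` between the frequencies `ζ` and `η`. The weighted Fourier transform
of `φ u` is therefore dominated by the convolution of that of `u` with the integrable kernel
`⟨2π ξ⟩ ^ N |𝓕 φ ξ|`, and Young's inequality `L¹ ∗ L² ⊆ L²` gives the bound.
-/

open FourierTransform
open scoped Real

section Young

theorem lintegral_mul_sq_le {α : Type*} [MeasurableSpace α] {ν : Measure α} {K g : α → ℝ≥0∞}
    (hK : AEMeasurable K ν) (hg : AEMeasurable g ν) :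
    (∫⁻ x, K x * g x ∂ν) ^ 2 ≤ (∫⁻ x, K x ∂ν) * ∫⁻ x, K x * g x ^ 2 ∂ν := by
  have hsqrt (x : ℝ≥0∞) : (x ^ (2⁻¹ : ℝ)) ^ 2 = x := by
    simpa using ENNReal.rpow_inv_natCast_pow two_ne_zero x
  have h := ENNReal.lintegral_mul_le_Lp_mul_Lq ν Real.HolderConjugate.two_two
    (hK.pow_const (2⁻¹ : ℝ)) ((hK.pow_const (2⁻¹ : ℝ)).mul hg)
  simp only [Pi.mul_apply, ← mul_assoc, ← sq, hsqrt, ENNReal.rpow_two, mul_pow] at h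
  calc (∫⁻ x, K x * g x ∂ν) ^ 2
      ≤ ((∫⁻ x, K x ∂ν) ^ (2⁻¹ : ℝ) * (∫⁻ x, K x * g x ^ 2 ∂ν) ^ (2⁻¹ : ℝ)) ^ 2 := by
        gcongr; simpa [one_div] using h
    _ = (∫⁻ x, K x ∂ν) * ∫⁻ x, K x * g x ^ 2 ∂ν := by rw [mul_pow, hsqrt, hsqrt]

variable {E β : Type*} [MeasurableSpace E] [AddGroup E] [MeasurableAdd E] [MeasurableSub₂ E]
  [MeasurableSpace β] {μ : Measure E} [SFinite μ] [μ.IsAddRightInvariant] {ν : Measure β}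
  [SFinite ν]

/-- Young's inequality `‖K ∗ G‖₂ ≤ ‖K‖₁ ‖G‖₂`, for a convolution twisted by `T`. -/
theorem lintegral_sq_lintegral_mul_sub_le {K : β → ℝ≥0∞} {G : E → ℝ≥0∞} {T : β → E}
    (hK : Measurable K) (hG : Measurable G) (hT : Measurable T) :
    ∫⁻ η, (∫⁻ ξ, K ξ * G (η - T ξ) ∂ν) ^ 2 ∂μ ≤ (∫⁻ ξ, K ξ ∂ν) ^ 2 * ∫⁻ η, G η ^ 2 ∂μ := by
  have hKG : Measurable (Function.uncurry fun η ξ => K ξ * G (η - T ξ) ^ 2) :=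
    (hK.comp measurable_snd).mul
      ((hG.comp (measurable_fst.sub (hT.comp measurable_snd))).pow_const 2)
  calc ∫⁻ η, (∫⁻ ξ, K ξ * G (η - T ξ) ∂ν) ^ 2 ∂μ
      ≤ ∫⁻ η, (∫⁻ ξ, K ξ ∂ν) * ∫⁻ ξ, K ξ * G (η - T ξ) ^ 2 ∂ν ∂μ :=
        lintegral_mono fun η => lintegral_mul_sq_le hK.aemeasurable
          (hG.comp (measurable_const.sub hT)).aemeasurable
    _ = (∫⁻ ξ, K ξ ∂ν) * ∫⁻ ξ, ∫⁻ η, K ξ * G (η - T ξ) ^ 2 ∂μ ∂ν := by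
        have hint : Measurable fun η => ∫⁻ ξ, K ξ * G (η - T ξ) ^ 2 ∂ν :=
          hKG.lintegral_prod_right'
        rw [lintegral_const_mul _ hint, lintegral_lintegral_swap hKG.aemeasurable]
    _ = (∫⁻ ξ, K ξ ∂ν) * ∫⁻ ξ, K ξ * ∫⁻ η, G η ^ 2 ∂μ ∂ν := by
        congr 1
        refine lintegral_congr fun ξ => ?_
        have hshift : Measurable fun η => G (η - T ξ) ^ 2 :=
          (hG.comp (measurable_sub_const _)).pow_const 2
        rw [lintegral_const_mul _ hshift,
          lintegral_sub_right_eq_self (fun η => G η ^ 2)]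
    _ = (∫⁻ ξ, K ξ ∂ν) ^ 2 * ∫⁻ η, G η ^ 2 ∂μ := by
        rw [lintegral_mul_const _ hK]
        ring

end Young

theorem Real.rpow_le_rpow_abs_mul_rpow {x y b : ℝ} (hx : 0 < x) (hy : 0 < y) (hxy : x ≤ b * y)
    (hyx : y ≤ b * x) (s : ℝ) : x ^ s ≤ b ^ |s| * y ^ s := by
  have hb : 0 < b := pos_of_mul_pos_left (hx.trans_le hxy) hy.le
  rcases le_total 0 s with hs | hs
  · rw [abs_of_nonneg hs, ← Real.mul_rpow hb.le hy.le]
    exact Real.rpow_le_rpow hx.le hxy hs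
  · rw [abs_of_nonpos hs, Real.rpow_neg hb.le, ← Real.inv_rpow hb.le,
      ← Real.mul_rpow (by positivity) hy.le]
    exact Real.rpow_le_rpow_of_nonpos (by positivity) (by rwa [inv_mul_le_iff₀ hb]) hs

section JapaneseBracket

variable {q : ℕ}

theorem jap_pos (η : Eucl q) : 0 < jap η := Real.sqrt_pos.2 (by positivity)

theorem continuous_jap : Continuous (jap : Eucl q → ℝ) := by unfold jap; fun_prop

theorem jap_sub_comm (η ζ : Eucl q) : jap (η - ζ) = jap (ζ - η) := by
  rw [jap, jap, norm_sub_rev]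

theorem jap_rpow_eq (η : Eucl q) (N : ℝ) : jap η ^ N = (1 + ‖η‖ ^ 2) ^ (N / 2) := by
  rw [jap, Real.sqrt_eq_rpow, ← Real.rpow_mul (by positivity)]
  ring_nf

/-- Peetre's inequality. -/
theorem jap_le_sqrt_two_mul_jap_sub_mul_jap (η ζ : Eucl q) :
    jap η ≤ √2 * jap (η - ζ) * jap ζ := by
  rw [jap, jap, jap, ← Real.sqrt_mul zero_le_two, ← Real.sqrt_mul (by positivity)]
  apply Real.sqrt_le_sqrt
  have := norm_add_le (η - ζ) ζ
  rw [sub_add_cancel] at this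
  nlinarith [norm_nonneg η, norm_nonneg ζ, norm_nonneg (η - ζ), sq_nonneg (‖ζ‖ * ‖η - ζ‖),
    sq_nonneg (‖ζ‖ - ‖η - ζ‖)]

theorem jap_le_sqrt_two_mul_jap_sub_mul_jap' (η ζ : Eucl q) :
    jap ζ ≤ √2 * jap (η - ζ) * jap η := by
  rw [jap_sub_comm]; exact jap_le_sqrt_two_mul_jap_sub_mul_jap ζ η

theorem jap_rpow_le (s : ℝ) (η ζ : Eucl q) :
    jap η ^ s ≤ (√2 * jap (η - ζ)) ^ |s| * jap ζ ^ s :=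
  Real.rpow_le_rpow_abs_mul_rpow (jap_pos η) (jap_pos ζ) (jap_le_sqrt_two_mul_jap_sub_mul_jap η ζ)
    (jap_le_sqrt_two_mul_jap_sub_mul_jap' η ζ) s

theorem integrable_norm_mul_jap_rpow (ψ : SchwartzMap (Eucl q) ℂ) (a N : ℝ) :
    Integrable fun ξ => ‖ψ ξ‖ * jap (a • ξ) ^ N := by
  have hg : Function.HasTemperateGrowth fun ξ : Eucl q => jap (a • ξ) ^ N := by
    simp_rw [jap_rpow_eq]
    exact (Function.hasTemperateGrowth_one_add_norm_sq_rpow (Eucl q) (N / 2)).comp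
      (a • ContinuousLinearMap.id ℝ (Eucl q)).hasTemperateGrowth
  refine (SchwartzMap.smulLeftCLM ℂ (fun ξ => jap (a • ξ) ^ N) ψ).integrable.norm.congr
    (.of_forall fun ξ => ?_)
  dsimp only
  rw [SchwartzMap.smulLeftCLM_apply_apply hg, norm_smul, Real.norm_of_nonneg
    (Real.rpow_nonneg (jap_pos _).le _), mul_comm]

end JapaneseBracket

namespace GroupAction

variable {H : Type*} [NormedAddCommGroup H] [NormedSpace ℂ H] (ga : GroupAction H)

theorem κ_one_apply (h : H) : ga.κ 1 h = h :=
  (ga.κ 1).injective (by rw [ga.mul one_pos one_pos, one_mul])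

theorem κ_symm_apply {t : ℝ} (ht : 0 < t) (h : H) : (ga.κ t).symm h = ga.κ t⁻¹ h := by
  rw [ContinuousLinearEquiv.symm_apply_eq, ga.mul ht (inv_pos.2 ht), mul_inv_cancel₀ ht.ne',
    ga.κ_one_apply]

theorem norm_κ_pow_apply_le {r c : ℝ} (hr : 0 < r) (hc₀ : 0 ≤ c)
    (hc : ∀ h : H, ‖ga.κ r h‖ ≤ c * ‖h‖) (n : ℕ) (h : H) : ‖ga.κ (r ^ n) h‖ ≤ c ^ n * ‖h‖ := by
  induction n with
  | zero => simp [κ_one_apply]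
  | succ n ih =>
    rw [pow_succ', ← ga.mul hr (pow_pos hr n), pow_succ', mul_assoc]
    exact (hc _).trans (mul_le_mul_of_nonneg_left ih hc₀)

theorem exists_norm_κ_apply_le_of_isCompact [CompleteSpace H] {K : Set ℝ} (hK : IsCompact K)
    (hK₀ : K ⊆ Set.Ioi 0) : ∃ c, ∀ t ∈ K, ∀ h : H, ‖ga.κ t h‖ ≤ c * ‖h‖ := by
  obtain ⟨c, hc⟩ := banach_steinhaus (g := fun t : K => (ga.κ t : H →L[ℂ] H)) fun h =>
    let ⟨C, hC⟩ := hK.exists_bound_of_continuousOn ((ga.strong_cont h).mono hK₀)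
    ⟨C, fun t => hC t t.2⟩
  exact ⟨c, fun t ht h => ((ga.κ t : H →L[ℂ] H).le_opNorm h).trans
    (mul_le_mul_of_nonneg_right (hc ⟨t, ht⟩) (norm_nonneg h))⟩

theorem exists_norm_κ_apply_le [CompleteSpace H] :
    ∃ c > 0, ∃ M : ℕ, ∀ ⦃t : ℝ⦄, 0 < t → ∀ h : H, ‖ga.κ t h‖ ≤ c * max t t⁻¹ ^ M * ‖h‖ := by
  obtain ⟨c₀, hc₀⟩ := ga.exists_norm_κ_apply_le_of_isCompact (isCompact_Icc (a := 2⁻¹) (b := 2))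
    fun t ht => lt_of_lt_of_le (by norm_num) ht.1
  set c := max c₀ 1
  have hc : 0 < c := lt_of_lt_of_le one_pos (le_max_right _ _)
  obtain ⟨M, hM⟩ := pow_unbounded_of_one_lt c one_lt_two
  refine ⟨c, hc, M, fun t ht h => ?_⟩
  set m := max t t⁻¹
  have hm : 1 ≤ m := by
    rcases le_total 1 t with h1 | h1
    · exact h1.trans (le_max_left _ _)
    · exact (one_le_inv₀ ht |>.2 h1).trans (le_max_right _ _)
  -- Write `t = r ^ (n + 1)` with `r ∈ [1/2, 2]`, where `2 ^ n ≤ m < 2 ^ (n + 1)`.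
  obtain ⟨n, hnm, hmn⟩ := exists_nat_pow_near hm one_lt_two
  set r := t ^ ((n + 1 : ℕ) : ℝ)⁻¹
  have hr₀ : 0 < r := Real.rpow_pos_of_pos ht _
  have hrt : r ^ (n + 1) = t := Real.rpow_inv_natCast_pow ht.le n.succ_ne_zero
  have hr : r ∈ Set.Icc 2⁻¹ 2 := by
    constructor
    · refine le_of_pow_le_pow_left₀ n.succ_ne_zero hr₀.le ?_
      rw [hrt, inv_pow, inv_le_comm₀ (by positivity) ht]
      exact (le_max_right _ _).trans hmn.le
    · refine le_of_pow_le_pow_left₀ n.succ_ne_zero zero_le_two ?_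
      rw [hrt]
      exact (le_max_left _ _).trans hmn.le
  calc ‖ga.κ t h‖ = ‖ga.κ (r ^ (n + 1)) h‖ := by rw [hrt]
    _ ≤ c ^ (n + 1) * ‖h‖ := ga.norm_κ_pow_apply_le hr₀ hc.le
        (fun h => (hc₀ r hr h).trans (by gcongr; exact le_max_left _ _)) _ h
    _ ≤ c * m ^ M * ‖h‖ := by
        rw [pow_succ']
        gcongr
        calc c ^ n ≤ (2 ^ M) ^ n := by gcongr
          _ = (2 ^ n) ^ M := by rw [← pow_mul, ← pow_mul, mul_comm]
          _ ≤ m ^ M := by gcongr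

theorem exists_jap_rpow_mul_norm_κ_symm_le [CompleteSpace H] (q : ℕ) (s : ℝ) :
    ∃ C N : ℝ, ∀ (η ζ : Eucl q) (x : H), jap η ^ s * ‖(ga.κ (jap η)).symm x‖ ≤
      C * jap (η - ζ) ^ N * (jap ζ ^ s * ‖(ga.κ (jap ζ)).symm x‖) := by
  obtain ⟨c, hc, M, hκ⟩ := ga.exists_norm_κ_apply_le
  refine ⟨c * √2 ^ ((M : ℝ) + |s|), M + |s|, fun η ζ x => ?_⟩
  have hη := jap_pos η
  have hζ := jap_pos ζ
  set r := (jap η)⁻¹ * jap ζ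
  set b := √2 * jap (η - ζ)
  have hb : 0 < b := mul_pos (by positivity) (jap_pos _)
  have hr : 0 < r := mul_pos (inv_pos.2 hη) hζ
  have hrb : max r r⁻¹ ≤ b := by
    refine max_le ?_ ?_
    · rw [inv_mul_le_iff₀ hη, mul_comm]
      exact jap_le_sqrt_two_mul_jap_sub_mul_jap' η ζ
    · rw [mul_inv, inv_inv, mul_inv_le_iff₀ hζ]
      exact jap_le_sqrt_two_mul_jap_sub_mul_jap η ζ
  have hsymm : (ga.κ (jap η)).symm x = ga.κ r ((ga.κ (jap ζ)).symm x) := by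
    rw [ga.κ_symm_apply hη, ga.κ_symm_apply hζ, ga.mul hr (inv_pos.2 hζ),
      mul_inv_cancel_right₀ hζ.ne']
  set y := (ga.κ (jap ζ)).symm x
  calc jap η ^ s * ‖(ga.κ (jap η)).symm x‖ ≤ (b ^ |s| * jap ζ ^ s) * (c * b ^ M * ‖y‖) := by
        rw [hsymm]
        refine mul_le_mul (jap_rpow_le s η ζ) ((hκ hr y).trans ?_) (norm_nonneg _)
          (by positivity)
        gcongr
    _ = c * √2 ^ ((M : ℝ) + |s|) * jap (η - ζ) ^ ((M : ℝ) + |s|) * (jap ζ ^ s * ‖y‖) := by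
        have hbN : b ^ |s| * b ^ M = √2 ^ ((M : ℝ) + |s|) * jap (η - ζ) ^ ((M : ℝ) + |s|) := by
          rw [← Real.mul_rpow (by positivity) (jap_pos _).le, Real.rpow_add hb, Real.rpow_natCast,
            mul_comm]
        linear_combination (c * jap ζ ^ s * ‖y‖) * hbN

end GroupAction

section Fourier

variable {q : ℕ} {H : Type*} [NormedAddCommGroup H] [NormedSpace ℂ H]

theorem ft_eq_fourier (u : Eucl q → H) (η : Eucl q) : ft u η = 𝓕 u ((2 * π)⁻¹ • η) := by
  rw [Real.fourier_eq', ft]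
  congr 1 with y
  rw [real_inner_smul_right, show -2 * π * ((2 * π)⁻¹ * inner ℝ y η) = -inner ℝ y η by
    field_simp]
  push_cast
  ring_nf

theorem continuous_ft {u : Eucl q → H} (hu : Integrable u) : Continuous (ft u) := by
  rw [funext (ft_eq_fourier u)]
  exact (VectorFourier.fourierIntegral_continuous Real.continuous_fourierChar continuous_inner
    hu).comp (continuous_const_smul _)

theorem exp_inner_mul_exp_inner (y η ξ : Eucl q) :
    exp (-I * (inner ℝ y η : ℝ)) * exp ((2 * π * inner ℝ ξ y : ℝ) * I) =
      exp (-I * (inner ℝ y (η - (2 * π) • ξ) : ℝ)) := by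
  rw [← Complex.exp_add, inner_sub_right, real_inner_smul_right, real_inner_comm ξ y]
  push_cast
  ring_nf

/-- The factor `2π` appears because `ft` has no `2π` in its exponent while `𝓕` does. -/
theorem ft_smul_eq_integral [CompleteSpace H] (φ : SchwartzMap (Eucl q) ℂ) {u : Eucl q → H}
    (hu : Integrable u) (η : Eucl q) :
    ft (fun y => φ y • u y) η = ∫ ξ, 𝓕 φ ξ • ft u (η - (2 * π) • ξ) := by
  set F : Eucl q → Eucl q → H := fun ξ y =>
    (exp (-I * (inner ℝ y (η - (2 * π) • ξ) : ℝ)) * 𝓕 φ ξ) • u y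
  have hφ (y : Eucl q) : φ y = ∫ ξ, exp ((2 * π * inner ℝ ξ y : ℝ) * I) * 𝓕 φ ξ := by
    conv_lhs => rw [← FourierPair.fourierInv_fourier_eq (F := SchwartzMap (Eucl q) ℂ) φ]
    rw [SchwartzMap.fourierInv_coe, Real.fourierInv_eq']
    rfl
  have hF : Integrable (Function.uncurry F) (volume.prod volume) := by
    refine ((𝓕 φ).integrable.norm.mul_prod hu.norm).mono' ?_ (.of_forall fun p => ?_)
    · refine AEStronglyMeasurable.smul (Continuous.aestronglyMeasurable (by fun_prop)) hu.1.comp_snd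
    · simp [F, Function.uncurry, norm_smul, Complex.norm_exp]
  calc ft (fun y => φ y • u y) η = ∫ y, ∫ ξ, F ξ y := by
        rw [ft]
        congr 1 with y
        rw [hφ y, ← integral_smul_const, ← integral_smul]
        congr 1 with ξ
        rw [smul_smul, ← mul_assoc, exp_inner_mul_exp_inner]
    _ = ∫ ξ, ∫ y, F ξ y := (integral_integral_swap hF).symm
    _ = ∫ ξ, 𝓕 φ ξ • ft u (η - (2 * π) • ξ) := by
        congr 1 with ξ
        simp only [F, ft, ← integral_smul, smul_smul, mul_comm]

end Fourier

section SobolevDensity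

variable {q : ℕ} {H : Type*} [NormedAddCommGroup H] [NormedSpace ℂ H]

/-- `‖u‖_{𝒲^s} ^ 2 = ∫⁻ η, sobolevDensity ga s u η ^ 2`. -/
def sobolevDensity (ga : GroupAction H) (s : ℝ) (u : Eucl q → H) (η : Eucl q) : ℝ≥0∞ :=
  ENNReal.ofReal (jap η ^ s * ‖(ga.κ (jap η)).symm (ft u η)‖)

theorem sobolevDensity_sq (ga : GroupAction H) (s : ℝ) (u : Eucl q → H) (η : Eucl q) :
    sobolevDensity ga s u η ^ 2 =
      ENNReal.ofReal (jap η ^ (2 * s)) * (‖(ga.κ (jap η)).symm (ft u η)‖₊ : ℝ≥0∞) ^ 2 := by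
  have hη := (jap_pos η).le
  rw [sobolevDensity, ← ENNReal.ofReal_pow (by positivity), mul_pow, ENNReal.ofReal_mul
    (by positivity), ENNReal.ofReal_pow (norm_nonneg _), ofReal_norm, enorm_eq_nnnorm,
    ← Real.rpow_natCast, ← Real.rpow_mul hη, mul_comm s]
  norm_num

theorem measurable_sobolevDensity [CompleteSpace H] (ga : GroupAction H) (s : ℝ) {u : Eucl q → H}
    (hu : Integrable u) : Measurable (sobolevDensity ga s u) := by
  let _ : MeasurableSpace H := borel H
  have : BorelSpace H := ⟨rfl⟩
  have hκ : Measurable (Function.uncurry fun (t : Set.Ioi (0 : ℝ)) (h : H) => ga.κ t h) :=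
    measurable_uncurry_of_continuous_of_measurable (fun h => (ga.strong_cont h).domRestrict)
      fun t => (ga.κ t).continuous.measurable
  have hw : Measurable fun η : Eucl q => (ga.κ (jap η)).symm (ft u η) := by
    have h : (fun η : Eucl q => (ga.κ (jap η)).symm (ft u η)) = (Function.uncurry fun
        (t : Set.Ioi (0 : ℝ)) (h : H) => ga.κ t h) ∘
        fun η => (⟨(jap η)⁻¹, inv_pos.2 (jap_pos η)⟩, ft u η) :=
      funext fun η => ga.κ_symm_apply (jap_pos η) _
    rw [h]
    exact hκ.comp ((continuous_jap.inv₀ fun η => (jap_pos η).ne').measurable.subtype_mk.prodMk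
      (continuous_ft hu).measurable)
  exact ENNReal.measurable_ofReal.comp
    (((continuous_jap.rpow_const fun η => .inl (jap_pos η).ne').measurable).mul hw.norm)

theorem sobolevDensity_smul_le [CompleteSpace H] {ga : GroupAction H} {s C N : ℝ}
    (hweight : ∀ (η ζ : Eucl q) (x : H), jap η ^ s * ‖(ga.κ (jap η)).symm x‖ ≤
      C * jap (η - ζ) ^ N * (jap ζ ^ s * ‖(ga.κ (jap ζ)).symm x‖))
    (φ : SchwartzMap (Eucl q) ℂ) {u : Eucl q → H} (hu : Integrable u) (η : Eucl q) :
    sobolevDensity ga s (fun y => φ y • u y) η ≤ ∫⁻ ξ,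
      ENNReal.ofReal (C * (‖𝓕 φ ξ‖ * jap ((2 * π) • ξ) ^ N)) *
        sobolevDensity ga s u (η - (2 * π) • ξ) := by
  have hη := (jap_pos η).le
  rw [sobolevDensity, ft_smul_eq_integral φ hu, ← ContinuousLinearEquiv.integral_comp_comm,
    ENNReal.ofReal_mul (by positivity), ofReal_norm]
  calc ENNReal.ofReal (jap η ^ s) *
        ‖∫ ξ, (ga.κ (jap η)).symm (𝓕 φ ξ • ft u (η - (2 * π) • ξ))‖ₑ
      ≤ ENNReal.ofReal (jap η ^ s) *
        ∫⁻ ξ, ‖(ga.κ (jap η)).symm (𝓕 φ ξ • ft u (η - (2 * π) • ξ))‖ₑ := by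
        gcongr
        exact enorm_integral_le_lintegral_enorm _
    _ = ∫⁻ ξ, ENNReal.ofReal (‖𝓕 φ ξ‖ *
          (jap η ^ s * ‖(ga.κ (jap η)).symm (ft u (η - (2 * π) • ξ))‖)) := by
        rw [← lintegral_const_mul' _ _ ENNReal.ofReal_ne_top]
        congr 1 with ξ
        rw [map_smul, ← ofReal_norm, ← ENNReal.ofReal_mul (by positivity), norm_smul]
        ring_nf
    _ ≤ _ := by
        refine lintegral_mono fun ξ => ?_
        rw [sobolevDensity, ← ENNReal.ofReal_mul'
          (mul_nonneg (Real.rpow_nonneg (jap_pos _).le _) (norm_nonneg _))]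
        refine ENNReal.ofReal_le_ofReal ?_
        have h := hweight η (η - (2 * π) • ξ) (ft u (η - (2 * π) • ξ))
        rw [sub_sub_cancel] at h
        calc _ ≤ ‖𝓕 φ ξ‖ * (C * jap ((2 * π) • ξ) ^ N * (jap (η - (2 * π) • ξ) ^ s *
              ‖(ga.κ (jap (η - (2 * π) • ξ))).symm (ft u (η - (2 * π) • ξ))‖)) := by gcongr
          _ = _ := by ring

end SobolevDensity

/-- Multiplication by a scalar Schwartz function `φ` is bounded on `𝒲^s(ℝ^q, H)`:
there is `C > 0` with `‖φ·u‖_{𝒲^s} ≤ C ‖u‖_{𝒲^s}` for all Schwartz `u` (stated with squared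
norms). -/
theorem stmt10 {q : ℕ} (H : Type*) [NormedAddCommGroup H] [InnerProductSpace ℂ H]
    [CompleteSpace H] (ga : GroupAction H) (s : ℝ) (φ : SchwartzMap (Eucl q) ℂ) :
    ∃ C > (0 : ℝ), ∀ u : SchwartzMap (Eucl q) H,
      (∫⁻ η, ENNReal.ofReal (jap η ^ (2 * s)) *
          ((‖(ga.κ (jap η)).symm (ft (fun y => φ y • u y) η)‖₊ : ℝ≥0∞) ^ 2))
        ≤ ENNReal.ofReal (C ^ 2) *
          (∫⁻ η, ENNReal.ofReal (jap η ^ (2 * s)) *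
            ((‖(ga.κ (jap η)).symm (ft (⇑u) η)‖₊ : ℝ≥0∞) ^ 2)) := by
  obtain ⟨C, N, hweight⟩ := ga.exists_jap_rpow_mul_norm_κ_symm_le q s
  set K : Eucl q → ℝ≥0∞ := fun ξ => ENNReal.ofReal (C * (‖𝓕 φ ξ‖ * jap ((2 * π) • ξ) ^ N))
  have hK : Measurable K := by
    refine ENNReal.measurable_ofReal.comp (Continuous.measurable ?_)
    exact continuous_const.mul ((𝓕 φ).continuous.norm.mul ((continuous_jap.comp
      (continuous_const_smul _)).rpow_const fun ξ => .inl (jap_pos _).ne'))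
  have hK_fin : ∫⁻ ξ, K ξ ≠ ⊤ :=
    ((integrable_norm_mul_jap_rpow (𝓕 φ) _ N).const_mul C).lintegral_lt_top.ne
  refine ⟨max (∫⁻ ξ, K ξ).toReal 1, by positivity, fun u => ?_⟩
  simp_rw [← sobolevDensity_sq]
  calc ∫⁻ η, sobolevDensity ga s (fun y => φ y • u y) η ^ 2
      ≤ ∫⁻ η, (∫⁻ ξ, K ξ * sobolevDensity ga s u (η - (2 * π) • ξ)) ^ 2 :=
        lintegral_mono fun η => pow_le_pow_left' (sobolevDensity_smul_le hweight φ u.integrable η) 2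
    _ ≤ (∫⁻ ξ, K ξ) ^ 2 * ∫⁻ η, sobolevDensity ga s u η ^ 2 :=
        lintegral_sq_lintegral_mul_sub_le hK (measurable_sobolevDensity ga s u.integrable)
          (measurable_const_smul _)
    _ ≤ _ := by
        rw [ENNReal.ofReal_pow (by positivity)]
        gcongr
        exact (ENNReal.le_ofReal_iff_toReal_le hK_fin (by positivity)).2 (le_max_left _ _)
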